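/- Let Ω ⊆ ℝ^n be a connected open set, let p > 1, and let X_1, …, X_N : Ω → ℝ^n be continuous vector fields such that for every x ∈ Ω the vectors X_1(x), …, X_N(x) span ℝ^n. Let u, v ∈ C^1(Ω) with v(x) > 0 and u(x) ≥ 0 for all x ∈ Ω. Then L(u,v)(x) = 0 for every x ∈ Ω if and only if there exists a constant c ≥ 0 such that u = c v on Ω; moreover, if u is not identically zero then c > 0. -/

import Mathlib

open scoped RealInnerProductSpace

/-- The horizontal gradient `∇_X u (x) = (⟨X 1 x, ∇u x⟩, …, ⟨X N x, ∇u x⟩) ∈ ℝ^N`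
associated with the family of vector fields `X : Fin N → ℝ^n → ℝ^n`. -/
noncomputable def gradX {n N : ℕ}
    (X : Fin N → EuclideanSpace ℝ (Fin n) → EuclideanSpace ℝ (Fin n))
    (u : EuclideanSpace ℝ (Fin n) → ℝ) (x : EuclideanSpace ℝ (Fin n)) :
    EuclideanSpace ℝ (Fin N) :=
  (WithLp.equiv 2 (Fin N → ℝ)).symm fun k => ⟪X k x, gradient u x⟫

/-- `L(u,v)(x)` from Picone's identity for general vector fields.
Real exponents are interpreted via `Real.rpow`, so the term containing the factor
`‖∇_X v‖^{p−2}` is `0` where `∇_X v = 0`. -/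
noncomputable def piconeL {n N : ℕ} (p : ℝ)
    (X : Fin N → EuclideanSpace ℝ (Fin n) → EuclideanSpace ℝ (Fin n))
    (u v : EuclideanSpace ℝ (Fin n) → ℝ) (x : EuclideanSpace ℝ (Fin n)) : ℝ :=
  ‖gradX X u x‖ ^ p
    - p * ((|u x| ^ (p - 2) * u x) / (|v x| ^ (p - 2) * v x)) *
        (‖gradX X v x‖ ^ (p - 2) * ⟪gradX X v x, gradX X u x⟫)
    + (p - 1) * (|u x| ^ p / |v x| ^ p) * ‖gradX X v x‖ ^ p

/-!
Write `s = u / v`, `a = ∇_X u`, `b = ∇_X v`. Then `L(u,v)` is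
`(‖a‖^p + (p-1) (s‖b‖)^p - p (s‖b‖)^(p-1) ‖a‖) + p s^(p-1) ‖b‖^(p-2) (‖b‖‖a‖ - ⟪b, a⟫)`,
a gap in Young's inequality plus a gap in Cauchy–Schwarz. Both are nonnegative, so `L(u,v) = 0`
forces equality in both, that is `a = s • b`. Because the `X_k(x)` span `ℝ^n`, this says
`du = (u/v) dv`, so `u/v` has zero differential and is constant on the connected set `Ω`.
-/

namespace Real

variable {p x : ℝ}

theorem rpow_sub_two_mul_self (hx : 0 ≤ x) (hp : p ≠ 1) : x ^ (p - 2) * x = x ^ (p - 1) := by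
  rw [← rpow_add_one' hx (by contrapose! hp; linarith)]
  ring_nf

theorem abs_rpow_sub_two_mul_self (hx : 0 ≤ x) (hp : p ≠ 1) :
    |x| ^ (p - 2) * x = x ^ (p - 1) := by
  rw [abs_of_nonneg hx, rpow_sub_two_mul_self hx hp]

theorem add_sub_one_mul_rpow_eq_young {A B : ℝ} (hp : 1 < p) (hB : 0 ≤ B) :
    A ^ p + (p - 1) * B ^ p =
      p * (A ^ p / p + (B ^ (p - 1)) ^ p.conjExponent / p.conjExponent) := by
  rw [← rpow_mul hB, conjExponent, mul_div_cancel₀ _ (by linarith)]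
  field_simp

theorem mul_rpow_sub_one_mul_le {A B : ℝ} (hp : 1 < p) (hA : 0 ≤ A) (hB : 0 ≤ B) :
    p * B ^ (p - 1) * A ≤ A ^ p + (p - 1) * B ^ p := by
  rw [add_sub_one_mul_rpow_eq_young hp hB, mul_assoc, mul_comm (B ^ _)]
  exact mul_le_mul_of_nonneg_left
    (young_inequality_of_nonneg hA (rpow_nonneg hB _) (.conjExponent hp)) (by linarith)

theorem mul_rpow_sub_one_mul_eq_iff {A B : ℝ} (hp : 1 < p) (hA : 0 ≤ A) (hB : 0 ≤ B) :
    p * B ^ (p - 1) * A = A ^ p + (p - 1) * B ^ p ↔ A = B := by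
  rw [add_sub_one_mul_rpow_eq_young hp hB, mul_assoc, mul_comm (B ^ _),
    mul_right_inj' (by linarith),
    young_inequality_eq_iff_of_nonneg hA (rpow_nonneg hB _) (.conjExponent hp),
    ← rpow_mul hB, conjExponent, mul_div_cancel₀ _ (by linarith),
    rpow_left_inj hA hB (by linarith)]

end Real

section PiconeForm

variable {F : Type*} [NormedAddCommGroup F] [InnerProductSpace ℝ F]

noncomputable def piconeForm (p s : ℝ) (a b : F) : ℝ :=
  ‖a‖ ^ p - p * s ^ (p - 1) * (‖b‖ ^ (p - 2) * ⟪b, a⟫) + (p - 1) * s ^ p * ‖b‖ ^ p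

variable {p s : ℝ}

theorem piconeForm_eq_young_add_inner (hp : 1 < p) (hs : 0 ≤ s) (a b : F) :
    piconeForm p s a b =
      (‖a‖ ^ p + (p - 1) * (s * ‖b‖) ^ p - p * (s * ‖b‖) ^ (p - 1) * ‖a‖)
        + p * s ^ (p - 1) * ‖b‖ ^ (p - 2) * (‖b‖ * ‖a‖ - ⟪b, a⟫) := by
  rw [piconeForm, Real.mul_rpow hs (norm_nonneg b), Real.mul_rpow hs (norm_nonneg b),
    ← Real.rpow_sub_two_mul_self (norm_nonneg b) hp.ne']
  ring

theorem piconeForm_eq_zero_iff (hp : 1 < p) (hs : 0 ≤ s) (a b : F) :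
    piconeForm p s a b = 0 ↔ a = s • b := by
  have hsb : 0 ≤ s * ‖b‖ := mul_nonneg hs (norm_nonneg b)
  rw [piconeForm_eq_young_add_inner hp hs]
  constructor
  · intro h
    have hyoung := Real.mul_rpow_sub_one_mul_le hp (norm_nonneg a) hsb
    have hcs : 0 ≤ ‖b‖ * ‖a‖ - ⟪b, a⟫ := sub_nonneg.2 (real_inner_le_norm b a)
    obtain ⟨hY, hC⟩ := (add_eq_zero_iff_of_nonneg (by linarith) (by positivity)).1 h
    have hnorm : ‖a‖ = s * ‖b‖ :=
      (Real.mul_rpow_sub_one_mul_eq_iff hp (norm_nonneg a) hsb).1 (by linarith)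
    rcases hsb.eq_or_lt with h0 | hpos
    · rw [← h0, norm_eq_zero] at hnorm
      rw [hnorm, eq_comm, ← norm_eq_zero, norm_smul, Real.norm_of_nonneg hs, h0]
    have hs0 : 0 < s := pos_of_mul_pos_left hpos (norm_nonneg b)
    have hnb : 0 < ‖b‖ := pos_of_mul_pos_right hpos hs
    have hinner : ⟪b, a⟫ = ‖b‖ * ‖a‖ := by
      rw [mul_eq_zero, sub_eq_zero] at hC
      exact (hC.resolve_left (by positivity)).symm
    rw [inner_eq_norm_mul_iff_real, hnorm, mul_comm, ← smul_smul] at hinner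
    exact (smul_right_injective F hnb.ne' hinner).symm
  · rintro rfl
    have hnorm : ‖s • b‖ = s * ‖b‖ := by rw [norm_smul, Real.norm_of_nonneg hs]
    rw [hnorm, (Real.mul_rpow_sub_one_mul_eq_iff hp hsb hsb).2 rfl, real_inner_smul_right,
      real_inner_self_eq_norm_mul_norm]
    ring

end PiconeForm

theorem IsOpen.div_eq_div_of_fderiv_eq_div_smul {E : Type*} [NormedAddCommGroup E]
    [NormedSpace ℝ E] {s : Set E} {u v : E → ℝ} (hs : IsOpen s) (hs' : IsPreconnected s)
    (hu : DifferentiableOn ℝ u s) (hv : DifferentiableOn ℝ v s) (hv0 : ∀ x ∈ s, v x ≠ 0)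
    (h : ∀ x ∈ s, fderiv ℝ u x = (u x / v x) • fderiv ℝ v x) {x y : E} (hx : x ∈ s)
    (hy : y ∈ s) : u x / v x = u y / v y := by
  simp only [div_eq_mul_inv]
  refine hs.is_const_of_fderiv_eq_zero hs' (hu.mul (hv.inv hv0)) (fun z hz => ?_) hx hy
  have hvz := hv0 z hz
  have hu' := (hu.differentiableAt (hs.mem_nhds hz)).hasFDerivAt
  have hv' := (hasFDerivAt_inv hvz).comp z (hv.differentiableAt (hs.mem_nhds hz)).hasFDerivAt
  have hq : HasFDerivAt (u * v⁻¹) _ z := hu'.mul hv'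
  rw [hq.fderiv, h z hz]
  ext w
  simp only [Pi.inv_apply, add_apply, smul_apply,
    ContinuousLinearMap.comp_apply, ContinuousLinearMap.toSpanSingleton_apply, smul_eq_mul,
    mul_neg, Pi.zero_apply, zero_apply]
  field_simp
  ring

section gradX

variable {n N : ℕ} {X : Fin N → EuclideanSpace ℝ (Fin n) → EuclideanSpace ℝ (Fin n)}
  {u v : EuclideanSpace ℝ (Fin n) → ℝ} {x : EuclideanSpace ℝ (Fin n)}

theorem gradX_apply (k : Fin N) : gradX X u x k = fderiv ℝ u x (X k x) := by
  rw [gradX, WithLp.equiv_symm_apply, PiLp.toLp_apply, gradient, real_inner_comm,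
    InnerProductSpace.toDual_symm_apply]

theorem gradX_eq_smul_iff (hspan : Submodule.span ℝ (Set.range fun k => X k x) = ⊤) (c : ℝ) :
    gradX X u x = c • gradX X v x ↔ fderiv ℝ u x = c • fderiv ℝ v x := by
  constructor
  · intro h
    refine ContinuousLinearMap.coe_injective (LinearMap.ext_on_range hspan fun k => ?_)
    simpa [gradX_apply] using congr($h k)
  · intro h
    ext k
    simp [gradX_apply, h]

end gradX

theorem piconeL_eq_piconeForm {n N : ℕ} {p : ℝ} (hp : 1 < p)
    (X : Fin N → EuclideanSpace ℝ (Fin n) → EuclideanSpace ℝ (Fin n))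
    {u v : EuclideanSpace ℝ (Fin n) → ℝ} {x : EuclideanSpace ℝ (Fin n)}
    (hu : 0 ≤ u x) (hv : 0 < v x) :
    piconeL p X u v x = piconeForm p (u x / v x) (gradX X u x) (gradX X v x) := by
  rw [piconeL, piconeForm, Real.abs_rpow_sub_two_mul_self hu hp.ne',
    Real.abs_rpow_sub_two_mul_self hv.le hp.ne', abs_of_nonneg hu, abs_of_pos hv,
    ← Real.div_rpow hu hv.le, ← Real.div_rpow hu hv.le]

theorem picone_equality_case_general {n N : ℕ} (p : ℝ) (hp : 1 < p)
    (Ω : Set (EuclideanSpace ℝ (Fin n))) (hΩ : IsOpen Ω) (hconn : IsConnected Ω)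
    (X : Fin N → EuclideanSpace ℝ (Fin n) → EuclideanSpace ℝ (Fin n))
    (hspan : ∀ x ∈ Ω, Submodule.span ℝ (Set.range fun k => X k x) = ⊤)
    (u v : EuclideanSpace ℝ (Fin n) → ℝ)
    (hu : ContDiffOn ℝ 1 u Ω) (hv : ContDiffOn ℝ 1 v Ω)
    (hvpos : ∀ x ∈ Ω, 0 < v x) (hunn : ∀ x ∈ Ω, 0 ≤ u x) :
    (∀ x ∈ Ω, piconeL p X u v x = 0) ↔
      ∃ c : ℝ, 0 ≤ c ∧ (∀ x ∈ Ω, u x = c * v x) ∧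
        ((∃ x ∈ Ω, u x ≠ 0) → 0 < c) := by
  have hL : ∀ x ∈ Ω, piconeL p X u v x = 0 ↔ fderiv ℝ u x = (u x / v x) • fderiv ℝ v x :=
    fun x hx => by
      rw [piconeL_eq_piconeForm hp X (hunn x hx) (hvpos x hx),
        piconeForm_eq_zero_iff hp (div_nonneg (hunn x hx) (hvpos x hx).le),
        gradX_eq_smul_iff (hspan x hx)]
  constructor
  · intro h
    obtain ⟨x₀, hx₀⟩ := hconn.nonempty
    have hconst : ∀ x ∈ Ω, u x / v x = u x₀ / v x₀ := fun x hx =>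
      hΩ.div_eq_div_of_fderiv_eq_div_smul hconn.isPreconnected (hu.differentiableOn one_ne_zero)
        (hv.differentiableOn one_ne_zero) (fun y hy => (hvpos y hy).ne')
        (fun y hy => (hL y hy).1 (h y hy)) hx hx₀
    refine ⟨u x₀ / v x₀, div_nonneg (hunn x₀ hx₀) (hvpos x₀ hx₀).le, fun x hx => ?_, ?_⟩
    · rw [← hconst x hx, div_mul_cancel₀ _ (hvpos x hx).ne']
    · rintro ⟨x, hx, hux⟩
      rw [← hconst x hx]
      exact div_pos ((hunn x hx).lt_of_ne' hux) (hvpos x hx)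
  · rintro ⟨c, -, huc, -⟩ x hx
    rw [hL x hx, huc x hx, mul_div_cancel_right₀ _ (hvpos x hx).ne',
      (Filter.eventuallyEq_of_mem (hΩ.mem_nhds hx) huc).fderiv_eq,
      fderiv_const_mul ((hv.differentiableOn one_ne_zero).differentiableAt (hΩ.mem_nhds hx))]

/-- **Equality case in the Picone identity for general vector fields:**
on a connected open set `Ω` on which the vector fields span `ℝ^n` at every point,
for `C¹` functions `u ≥ 0` and `v > 0`, one has `L(u,v) ≡ 0` on `Ω` iff `u = c v`
on `Ω` for some constant `c ≥ 0`; moreover `c > 0` if `u` is not identically zero. -/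
theorem picone_equality_case {n N : ℕ} (p : ℝ) (hp : 1 < p)
    (Ω : Set (EuclideanSpace ℝ (Fin n))) (hΩ : IsOpen Ω) (hconn : IsConnected Ω)
    (X : Fin N → EuclideanSpace ℝ (Fin n) → EuclideanSpace ℝ (Fin n))
    (hX : ∀ k, ContinuousOn (X k) Ω)
    (hspan : ∀ x ∈ Ω, Submodule.span ℝ (Set.range fun k => X k x) = ⊤)
    (u v : EuclideanSpace ℝ (Fin n) → ℝ)
    (hu : ContDiffOn ℝ 1 u Ω) (hv : ContDiffOn ℝ 1 v Ω)
    (hvpos : ∀ x ∈ Ω, 0 < v x) (hunn : ∀ x ∈ Ω, 0 ≤ u x) :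
    (∀ x ∈ Ω, piconeL p X u v x = 0) ↔
      ∃ c : ℝ, 0 ≤ c ∧ (∀ x ∈ Ω, u x = c * v x) ∧
        ((∃ x ∈ Ω, u x ≠ 0) → 0 < c) :=
  picone_equality_case_general p hp Ω hΩ hconn X hspan u v hu hv hvpos hunn
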